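/- arXiv:1804.05412 — 6 statements merged into one kernel-verified Lean document; each statement's English description precedes it below -/
import Mathlib

section
/- Let V be a real vector space with complex structures I₊, I₋, an alternating bilinear form F, and a bivector Q viewed as a map Q: V* → V, such that I₊ - I₋ = Q ∘ F (equation ★1) and F(I₊u,v) + F(u,I₋v) = 0 (equation ★2). Define g(u,v) := -½ F((I₊+I₋)u, v). Then g is symmetric: g(u,v) = g(v,u) for all u, v. -/
namespace LinearMap.BilinForm

variable {R M : Type*} [CommRing R] [AddCommGroup M] [Module R M]

theorem apply_apply_eq_apply_apply_of_skew {F : LinearMap.BilinForm R M}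
    (hF : ∀ u v, F u v = -F v u) {A B : M →ₗ[R] M}
    (hAB : ∀ u v, F (A u) v = -F u (B v)) (u v : M) :
    F (A u) v = F (B v) u := by
  rw [hAB, hF (B v) u]

theorem apply_add_apply_comm_of_skew {F : LinearMap.BilinForm R M}
    (hF : ∀ u v, F u v = -F v u) {A B : M →ₗ[R] M}
    (hAB : ∀ u v, F (A u) v = -F u (B v)) (u v : M) :
    F (A u + B u) v = F (A v + B v) u := by
  rw [map_add, map_add, LinearMap.add_apply, LinearMap.add_apply,
    apply_apply_eq_apply_apply_of_skew hF hAB u v,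
    ← apply_apply_eq_apply_apply_of_skew hF hAB v u, add_comm]

end LinearMap.BilinForm

theorem stmt_2_general {V : Type*} [AddCommGroup V] [Module ℝ V]
    (Ip Im : V →ₗ[ℝ] V)
    (F : LinearMap.BilinForm ℝ V) (hFalt : ∀ u v, F u v = -F v u)
    (hstar2 : ∀ u v, F (Ip u) v = - F u (Im v))
    (g : V → V → ℝ) (hg : ∀ u v, g u v = -(1/2) * F (Ip u + Im u) v) :
    ∀ u v, g u v = g v u := by
  intro u v
  rw [hg, hg, LinearMap.BilinForm.apply_add_apply_comm_of_skew hFalt hstar2]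

/-- Given complex structures `I₊, I₋`, an alternating form `F`, and a skew
map `Q : V* → V` with `I₊ - I₋ = Q F` (★1) and `F I₊ + I₋* F = 0` (★2), the tensor
`g(u,v) := -½ F((I₊+I₋)u, v)` is symmetric. -/
theorem stmt_2 {V : Type*} [AddCommGroup V] [Module ℝ V]
    (Ip Im : V →ₗ[ℝ] V) (hIp : ∀ v, Ip (Ip v) = -v) (hIm : ∀ v, Im (Im v) = -v)
    (F : LinearMap.BilinForm ℝ V) (hFalt : ∀ u v, F u v = -F v u)
    (Q : Module.Dual ℝ V →ₗ[ℝ] V)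
    (hQ : ∀ ξ η : Module.Dual ℝ V, η (Q ξ) = - ξ (Q η))
    (hstar1 : ∀ v, Ip v - Im v = Q (F v))
    (hstar2 : ∀ u v, F (Ip u) v = - F u (Im v))
    (g : V → V → ℝ) (hg : ∀ u v, g u v = -(1/2) * F (Ip u + Im u) v) :
    ∀ u v, g u v = g v u :=
  stmt_2_general Ip Im F hFalt hstar2 g hg
end

section
/- Let (V, ω) be a real symplectic vector space, I a complex structure on V that is compatible in the sense that ω(Iu, Iv) = ω(u,v) and set B(u,v) := ω(Iu, v) (so that Ω = B + iω is the associated (2,0)-form data). Suppose L ⊂ V is a Lagrangian subspace for ω, and K₊, K₋ ⊂ V are I-invariant Lagrangian subspaces with K₊ and K₋ mutually symplectic orthogonal, and V = L ⊕ K₊ = L ⊕ K₋. Write, for u ∈ L, Iu = I₊u + k₊u with I₊u ∈ L, k₊u ∈ K₊, and Iu = I₋u + k₋u with I₋u ∈ L, k₋u ∈ K₋. Then B(I₊u, v) = B(I₋v, u) for all u, v ∈ L. -/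
/-!
Since `I² = -1` and `I` preserves `ω`, for `x` in the Lagrangian `L` we get
`B(x, u) = ω(Ix, u) = -ω(x, Iu)`, and only the `K±`-component of `Iu` survives:
`B(I₊u, v) = -ω(I₊u, k₋v)` and `B(I₋v, u) = -ω(I₋v, k₊u)`. These two numbers agree because
expanding `0 = ω(u, v) = ω(Iu, Iv)` with `Iu = I₊u + k₊u`, `Iv = I₋v + k₋v` kills the
`L × L` and `K₊ × K₋` terms and leaves `ω(I₊u, k₋v) + ω(k₊u, I₋v) = 0`.
-/

section CompatibleComplexStructure

variable {R V : Type*} [CommRing R] [AddCommGroup V] [Module R V]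
  {ω : LinearMap.BilinForm R V} {I : V →ₗ[R] V}

theorem apply_map_left_eq_neg_apply_map_right (hI2 : ∀ v, I (I v) = -v)
    (hcompat : ∀ u v, ω (I u) (I v) = ω u v) (x y : V) :
    ω (I x) y = -ω x (I y) := by
  rw [← hcompat, hI2, map_neg, LinearMap.neg_apply]

theorem apply_map_left_eq_neg_of_map_eq_add (hI2 : ∀ v, I (I v) = -v)
    (hcompat : ∀ u v, ω (I u) (I v) = ω u v) {x y a k : V} (hy : I y = a + k)
    (hxa : ω x a = 0) :
    ω (I x) y = -ω x k := by
  rw [apply_map_left_eq_neg_apply_map_right hI2 hcompat, hy, map_add, hxa, zero_add]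

theorem apply_eq_apply_of_map_eq_add_of_map_eq_add (halt : ω.IsAlt)
    (hcompat : ∀ u v, ω (I u) (I v) = ω u v) {L Kp Km : Submodule R V}
    (hL : ∀ u ∈ L, ∀ v ∈ L, ω u v = 0) (horth : ∀ kp ∈ Kp, ∀ km ∈ Km, ω kp km = 0)
    {u v a b kp km : V} (hu : u ∈ L) (hv : v ∈ L)
    (hIu : I u = a + kp) (ha : a ∈ L) (hkp : kp ∈ Kp)
    (hIv : I v = b + km) (hb : b ∈ L) (hkm : km ∈ Km) :
    ω a km = ω b kp := by
  have hexpand : ω (I u) (I v) = ω a km + ω kp b := by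
    rw [hIu, hIv]
    simp only [map_add, LinearMap.add_apply, hL a ha b hb, horth kp hkp km hkm,
      zero_add, add_zero]
    exact add_comm _ _
  have hsum : ω a km + ω kp b = 0 := by
    rw [← hexpand, hcompat, hL u hu v hv]
  rw [← halt.neg_eq kp b]
  linear_combination hsum

end CompatibleComplexStructure

theorem stmt_4_general {V : Type*} [AddCommGroup V] [Module ℝ V]
    (ω : LinearMap.BilinForm ℝ V) (halt : ∀ v, ω v v = 0)
    (I : V →ₗ[ℝ] V) (hI2 : ∀ v, I (I v) = -v)
    (hcompat : ∀ u v, ω (I u) (I v) = ω u v)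
    (L Kp Km : Submodule ℝ V)
    (hLlag : ∀ u ∈ L, ∀ v ∈ L, ω u v = 0)
    (horth : ∀ kp ∈ Kp, ∀ km ∈ Km, ω kp km = 0)
    (Ip Imn kp km : V → V)
    (hdecp : ∀ u ∈ L, I u = Ip u + kp u ∧ Ip u ∈ L ∧ kp u ∈ Kp)
    (hdecm : ∀ u ∈ L, I u = Imn u + km u ∧ Imn u ∈ L ∧ km u ∈ Km)
    (B : V → V → ℝ) (hB : ∀ u v, B u v = ω (I u) v) :
    ∀ u ∈ L, ∀ v ∈ L, B (Ip u) v = B (Imn v) u := by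
  intro u hu v hv
  obtain ⟨hIu, hIpu, hkpu⟩ := hdecp u hu
  obtain ⟨hIv, hImv, hkmv⟩ := hdecm v hv
  calc B (Ip u) v = -ω (Ip u) (km v) := by
        rw [hB, apply_map_left_eq_neg_of_map_eq_add hI2 hcompat hIv (hLlag _ hIpu _ hImv)]
    _ = -ω (Imn v) (kp u) := by
        rw [apply_eq_apply_of_map_eq_add_of_map_eq_add halt hcompat hLlag horth hu hv
          hIu hIpu hkpu hIv hImv hkmv]
    _ = B (Imn v) u := by
        rw [hB, apply_map_left_eq_neg_of_map_eq_add hI2 hcompat hIu (hLlag _ hImv _ hIpu)]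

/-- Let `(V, ω)` be symplectic, `I` a compatible complex structure,
`B(u,v) = ω(Iu,v)`, `L` a Lagrangian, `K₊, K₋` I-invariant Lagrangians that are
mutually symplectic orthogonal with `V = L ⊕ K₊ = L ⊕ K₋`.  Writing
`Iu = I₊u + k₊u = I₋u + k₋u` for `u ∈ L` (components in `L` and `K±`), we have
`B(I₊u, v) = B(I₋v, u)` for all `u, v ∈ L`. -/
theorem stmt_4 {V : Type*} [AddCommGroup V] [Module ℝ V]
    (ω : LinearMap.BilinForm ℝ V) (halt : ∀ v, ω v v = 0)
    (I : V →ₗ[ℝ] V) (hI2 : ∀ v, I (I v) = -v)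
    (hcompat : ∀ u v, ω (I u) (I v) = ω u v)
    (L Kp Km : Submodule ℝ V)
    (hLlag : ∀ u ∈ L, ∀ v ∈ L, ω u v = 0)
    (hKpI : ∀ k ∈ Kp, I k ∈ Kp) (hKmI : ∀ k ∈ Km, I k ∈ Km)
    (hKplag : ∀ u ∈ Kp, ∀ v ∈ Kp, ω u v = 0)
    (hKmlag : ∀ u ∈ Km, ∀ v ∈ Km, ω u v = 0)
    (horth : ∀ kp ∈ Kp, ∀ km ∈ Km, ω kp km = 0)
    (hcp : IsCompl L Kp) (hcm : IsCompl L Km)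
    (Ip Imn kp km : V → V)
    (hdecp : ∀ u ∈ L, I u = Ip u + kp u ∧ Ip u ∈ L ∧ kp u ∈ Kp)
    (hdecm : ∀ u ∈ L, I u = Imn u + km u ∧ Imn u ∈ L ∧ km u ∈ Km)
    (B : V → V → ℝ) (hB : ∀ u v, B u v = ω (I u) v) :
    ∀ u ∈ L, ∀ v ∈ L, B (Ip u) v = B (Imn v) u :=
  stmt_4_general ω halt I hI2 hcompat L Kp Km hLlag horth Ip Imn kp km hdecp hdecm B hB
end

section
/- On ℂ² with coordinates (a,b,x,y), the map t(a,b,x,y) = (eᵃx, y + xb) and s(a,b,x,y) = (x,y) satisfy: pulling back the meromorphic 2-form ω = (1/x) dx ∧ dy gives t*ω - s*ω = da ∧ d(y + xb) - db ∧ dx; in particular t*ω - s*ω extends to a holomorphic (hence globally defined) 2-form on all of ℂ⁴ and this 2-form is a (complex) symplectic form (closed and nondegenerate). -/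
open Complex

/-- The 2-form `da ∧ d(y + xb) - db ∧ dx` on `ℂ⁴`, evaluated at the point `p` on a pair
of tangent vectors `v, w`.  Coordinates: `0 ↦ a, 1 ↦ b, 2 ↦ x, 3 ↦ y`. -/
noncomputable def Om6 (p v w : Fin 4 → ℂ) : ℂ :=
  v 0 * (w 3 + p 1 * w 2 + p 2 * w 1) - w 0 * (v 3 + p 1 * v 2 + p 2 * v 1)
    - (v 1 * w 2 - w 1 * v 2)

/-!
Since `d(eᵃx)/(eᵃx) = da + dx/x`, the pullback `t*ω` equals `(da + dx/x) ∧ d(y + xb)`, and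
`dx/x ∧ d(y + xb) = dx/x ∧ dy + dx ∧ db`; subtracting `s*ω = dx/x ∧ dy` leaves a form with
polynomial coefficients. Its coefficients are affine in the point, so its exterior derivative is a
constant alternating expression that cancels; nondegeneracy is read off by pairing with the
coordinate vectors.
-/

lemma hasFDerivAt_Om6 (v w p : Fin 4 → ℂ) :
    HasFDerivAt (fun q => Om6 q v w)
      ((v 0 * w 2 - w 0 * v 2) • ContinuousLinearMap.proj (R := ℝ) (φ := fun _ : Fin 4 => ℂ) 1
        + (v 0 * w 1 - w 0 * v 1) • ContinuousLinearMap.proj (R := ℝ) (φ := fun _ : Fin 4 => ℂ) 2)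
      p := by
  have h := (((hasFDerivAt_apply (𝕜 := ℝ) 1 p).const_mul (v 0 * w 2 - w 0 * v 2)).add
    ((hasFDerivAt_apply (𝕜 := ℝ) 2 p).const_mul (v 0 * w 1 - w 0 * v 1))).const_add
      (v 0 * w 3 - w 0 * v 3 - (v 1 * w 2 - w 1 * v 2))
  refine h.congr_of_eventuallyEq (Filter.Eventually.of_forall fun q => ?_)
  simp only [Om6, Pi.add_apply]
  ring

lemma fderiv_Om6_apply (v w p u : Fin 4 → ℂ) :
    fderiv ℝ (fun q => Om6 q v w) p u
      = u 1 * (v 0 * w 2 - w 0 * v 2) + u 2 * (v 0 * w 1 - w 0 * v 1) := by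
  simp [(hasFDerivAt_Om6 v w p).fderiv, smul_eq_mul, mul_comm]

lemma eq_zero_of_forall_Om6_eq_zero {p v : Fin 4 → ℂ} (hv : ∀ w, Om6 p v w = 0) : v = 0 := by
  have h0 : v 0 = 0 := by simpa [Om6] using hv (Pi.single 3 1)
  have h2 : v 2 = 0 := by simpa [Om6, h0] using hv (Pi.single 1 1)
  have h1 : v 1 = 0 := by simpa [Om6, h0] using hv (Pi.single 2 1)
  have h3 : v 3 = 0 := by simpa [Om6, h0, h1, h2] using hv (Pi.single 0 1)
  funext i
  fin_cases i <;> assumption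

/-- With `t(a,b,x,y) = (eᵃx, y+xb)`, `s(a,b,x,y) = (x,y)`, and
`ω = (1/x) dx ∧ dy`, the pullback identity
`t*ω - s*ω = da ∧ d(y+xb) - db ∧ dx` holds on `{x ≠ 0}`, and the right-hand side
extends to all of `ℂ⁴` as a closed and nondegenerate (complex symplectic) 2-form. -/
theorem stmt_6 :
    (∀ p v w : Fin 4 → ℂ, p 2 ≠ 0 →
      (1 / (Complex.exp (p 0) * p 2)) *
          ((Complex.exp (p 0) * (p 2 * v 0 + v 2)) * (w 3 + p 1 * w 2 + p 2 * w 1)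
            - (Complex.exp (p 0) * (p 2 * w 0 + w 2)) * (v 3 + p 1 * v 2 + p 2 * v 1))
        - (1 / p 2) * (v 2 * w 3 - w 2 * v 3) = Om6 p v w)
    ∧ (∀ p v₀ v₁ v₂ : Fin 4 → ℂ,
        fderiv ℝ (fun q => Om6 q v₁ v₂) p v₀ - fderiv ℝ (fun q => Om6 q v₀ v₂) p v₁
          + fderiv ℝ (fun q => Om6 q v₀ v₁) p v₂ = 0)
    ∧ (∀ p v : Fin 4 → ℂ, (∀ w, Om6 p v w = 0) → v = 0) := by
  refine ⟨fun p v w hx => ?_, fun p v₀ v₁ v₂ => ?_, fun p v => eq_zero_of_forall_Om6_eq_zero⟩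
  · have he : Complex.exp (p 0) ≠ 0 := Complex.exp_ne_zero _
    field_simp
    simp only [Om6]
    ring
  · simp only [fderiv_Om6_apply]
    ring
end

section
/- Let K : ℂ² → ℝ be K(q₁,q₂) = q₁q̄₁ + q₂q̄₂. Then the 2-form F = i ∂∂̄K equals i(dq₁∧dq̄₁ + dq₂∧dq̄₂), and for the map s(q₁,q₂) = (q₂, q₁ - i|q₂|²) from ℂ² to ℂ², the (1,1)-part of F with respect to the complex structure pulled back by s satisfies F^{(1,1)_-} ∧ F^{(1,1)_-} = -2(1 - |q₂|²) dq₁∧dq̄₁∧dq₂∧dq̄₂. In particular this 4-form vanishes exactly on the set |q₂| = 1. -/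
open Complex

/-- `K(q₁,q₂) = q₁q̄₁ + q₂q̄₂`, viewed as a complex-valued function on `ℂ²`. -/
noncomputable def K9 (p : ℂ × ℂ) : ℂ :=
  p.1 * (starRingEnd ℂ) p.1 + p.2 * (starRingEnd ℂ) p.2

/-- Wirtinger derivative `∂/∂q₁`. -/
noncomputable def W1 (f : ℂ × ℂ → ℂ) (p : ℂ × ℂ) : ℂ :=
  (fderiv ℝ f p (1, 0) - Complex.I * fderiv ℝ f p (Complex.I, 0)) / 2

/-- Wirtinger derivative `∂/∂q̄₁`. -/
noncomputable def W1bar (f : ℂ × ℂ → ℂ) (p : ℂ × ℂ) : ℂ :=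
  (fderiv ℝ f p (1, 0) + Complex.I * fderiv ℝ f p (Complex.I, 0)) / 2

/-- Wirtinger derivative `∂/∂q₂`. -/
noncomputable def W2 (f : ℂ × ℂ → ℂ) (p : ℂ × ℂ) : ℂ :=
  (fderiv ℝ f p (0, 1) - Complex.I * fderiv ℝ f p (0, Complex.I)) / 2

/-- Wirtinger derivative `∂/∂q̄₂`. -/
noncomputable def W2bar (f : ℂ × ℂ → ℂ) (p : ℂ × ℂ) : ℂ :=
  (fderiv ℝ f p (0, 1) + Complex.I * fderiv ℝ f p (0, Complex.I)) / 2

/-- The 2-form `F = i(dq₁∧dq̄₁ + dq₂∧dq̄₂)` on `ℂ²`. -/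
noncomputable def F9 (v w : ℂ × ℂ) : ℂ :=
  Complex.I * ((v.1 * (starRingEnd ℂ) w.1 - w.1 * (starRingEnd ℂ) v.1)
    + (v.2 * (starRingEnd ℂ) w.2 - w.2 * (starRingEnd ℂ) v.2))

/-- The (real) differential of `s(q₁,q₂) = (q₂, q₁ - i q₂ q̄₂)` at the point `p`. -/
noncomputable def Ds9 (p v : ℂ × ℂ) : ℂ × ℂ :=
  (v.2, v.1 - Complex.I * (v.2 * (starRingEnd ℂ) p.2 + p.2 * (starRingEnd ℂ) v.2))

/-- The (1,1)-component of `F9` with respect to the complex structure `Iminus`. -/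
noncomputable def F11 (Iminus : ℂ × ℂ → (ℂ × ℂ) → ℂ × ℂ) (p v w : ℂ × ℂ) : ℂ :=
  (F9 v w + F9 (Iminus p v) (Iminus p w)) / 2

/-- Wedge product of two 2-forms, evaluated on four vectors. -/
noncomputable def wedge4 (B C : (ℂ × ℂ) → (ℂ × ℂ) → ℂ) (v₁ v₂ v₃ v₄ : ℂ × ℂ) : ℂ :=
  B v₁ v₂ * C v₃ v₄ - B v₁ v₃ * C v₂ v₄ + B v₁ v₄ * C v₂ v₃
    + B v₂ v₃ * C v₁ v₄ - B v₂ v₄ * C v₁ v₃ + B v₃ v₄ * C v₁ v₂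

/-- The 4-form `dq₁∧dq̄₁∧dq₂∧dq̄₂` evaluated on four vectors. -/
noncomputable def vol9 (v₁ v₂ v₃ v₄ : ℂ × ℂ) : ℂ :=
  Matrix.det
    !![v₁.1, (starRingEnd ℂ) v₁.1, v₁.2, (starRingEnd ℂ) v₁.2;
       v₂.1, (starRingEnd ℂ) v₂.1, v₂.2, (starRingEnd ℂ) v₂.2;
       v₃.1, (starRingEnd ℂ) v₃.1, v₃.2, (starRingEnd ℂ) v₃.2;
       v₄.1, (starRingEnd ℂ) v₄.1, v₄.2, (starRingEnd ℂ) v₄.2]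

/-! Since `s` is a diffeomorphism, the relation `Ds ∘ I₋ = i · Ds` determines `I₋` pointwise:
`I₋(v₁, v₂) = (i v₁ + 2 q₂ v̄₂, i v₂)`. Averaging `F` over `I₋` then gives the stated `(1,1)`-part
`i α + i (1 - 2|q₂|²) β + q̄₂ γ + q₂ δ` with `α = dq₁∧dq̄₁`, `β = dq₂∧dq̄₂`, `γ = dq₂∧dq₁`,
`δ = dq̄₂∧dq̄₁`. In its square only `α∧β = vol` and `γ∧δ = -vol` survive, so it equals
`(-2 (1 - 2|q₂|²) - 2|q₂|²) vol = -2 (1 - |q₂|²) vol`. -/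

open scoped ComplexConjugate

lemma fderiv_K9_apply (p v : ℂ × ℂ) :
    fderiv ℝ K9 p v = p.1 * conj v.1 + conj p.1 * v.1 + (p.2 * conj v.2 + conj p.2 * v.2) := by
  have hfst := hasFDerivAt_fst (𝕜 := ℝ) (E := ℂ) (F := ℂ) (p := p)
  have hsnd := hasFDerivAt_snd (𝕜 := ℝ) (E := ℂ) (F := ℂ) (p := p)
  have hK : HasFDerivAt K9 _ p := (hfst.mul (conjCLE.hasFDerivAt.comp p hfst)).add
    (hsnd.mul (conjCLE.hasFDerivAt.comp p hsnd))
  simp [hK.fderiv]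

lemma W1bar_K9 : W1bar K9 = Prod.fst := by
  funext q
  simp only [W1bar, fderiv_K9_apply, map_one, map_zero, conj_I]
  linear_combination (conj q.1 - q.1) / 2 * I_sq

lemma W2bar_K9 : W2bar K9 = Prod.snd := by
  funext q
  simp only [W2bar, fderiv_K9_apply, map_one, map_zero, conj_I]
  linear_combination (conj q.2 - q.2) / 2 * I_sq

lemma W1_fst (p : ℂ × ℂ) : W1 Prod.fst p = 1 := by
  simp [W1, fderiv_fst]

lemma W1_snd (p : ℂ × ℂ) : W1 Prod.snd p = 0 := by
  simp [W1, fderiv_snd]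

lemma W2_fst (p : ℂ × ℂ) : W2 Prod.fst p = 0 := by
  simp [W2, fderiv_fst]

lemma W2_snd (p : ℂ × ℂ) : W2 Prod.snd p = 1 := by
  simp [W2, fderiv_snd]

lemma eq_of_Ds9_eq_I_mul_Ds9 {p v u : ℂ × ℂ}
    (h : Ds9 p u = (I * (Ds9 p v).1, I * (Ds9 p v).2)) :
    u = (I * v.1 + 2 * p.2 * conj v.2, I * v.2) := by
  simp only [Ds9, Prod.mk.injEq] at h
  obtain ⟨h2, h1⟩ := h
  rw [h2, map_mul, conj_I] at h1
  ext
  · linear_combination h1 - 2 * p.2 * conj v.2 * I_sq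
  · exact h2

lemma vol9_eq_wedge4 (v₁ v₂ v₃ v₄ : ℂ × ℂ) :
    vol9 v₁ v₂ v₃ v₄ =
      wedge4 (fun v w => v.1 * conj w.1 - w.1 * conj v.1)
        (fun v w => v.2 * conj w.2 - w.2 * conj v.2) v₁ v₂ v₃ v₄ := by
  rw [vol9, Matrix.det_succ_row_zero]
  simp [Fin.sum_univ_succ, Matrix.det_fin_three, Fin.succAbove, wedge4]
  ring

section
variable {Iminus : ℂ × ℂ → (ℂ × ℂ) → ℂ × ℂ}
    (hI : ∀ p v, Ds9 p (Iminus p v) = (I * (Ds9 p v).1, I * (Ds9 p v).2))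
include hI

lemma F11_eq (p v w : ℂ × ℂ) :
    F11 Iminus p v w =
      I * (v.1 * conj w.1 - w.1 * conj v.1)
      + I * (1 - 2 * (p.2 * conj p.2)) * (v.2 * conj w.2 - w.2 * conj v.2)
      + conj p.2 * (v.2 * w.1 - w.2 * v.1)
      + p.2 * (conj v.2 * conj w.1 - conj w.2 * conj v.1) := by
  rw [F11, eq_of_Ds9_eq_I_mul_Ds9 (hI p v), eq_of_Ds9_eq_I_mul_Ds9 (hI p w)]
  simp only [F9, map_add, map_mul, conj_I, conj_conj, map_ofNat]
  ring_nf
  simp only [I_sq, I_pow_three]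
  ring

lemma wedge4_F11_self (p v₁ v₂ v₃ v₄ : ℂ × ℂ) :
    wedge4 (F11 Iminus p) (F11 Iminus p) v₁ v₂ v₃ v₄ =
      -2 * (1 - p.2 * conj p.2) * vol9 v₁ v₂ v₃ v₄ := by
  simp only [vol9_eq_wedge4, wedge4, F11_eq hI]
  ring_nf
  rw [I_sq]
  ring

end

lemma neg_two_mul_one_sub_mul_conj_eq_zero_iff (z : ℂ) :
    -2 * (1 - z * conj z) = 0 ↔ ‖z‖ = 1 := by
  rw [mul_conj', mul_eq_zero, or_iff_right (by norm_num), sub_eq_zero, eq_comm]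
  exact_mod_cast pow_eq_one_iff_of_nonneg (norm_nonneg z) two_ne_zero

/-- with `K = |q₁|² + |q₂|²`, the form `F = i∂∂̄K` equals
`i(dq₁∧dq̄₁ + dq₂∧dq̄₂)` (mixed Wirtinger derivatives of `K` are `δᵢⱼ`); for the
complex structure `I₋` pulled back by `s(q₁,q₂) = (q₂, q₁ - i|q₂|²)`, the
(1,1)-part of `F` is as computed, and
`F^{(1,1)_-} ∧ F^{(1,1)_-} = -2(1-|q₂|²) dq₁∧dq̄₁∧dq₂∧dq̄₂`, which vanishes exactly
on `|q₂| = 1`. -/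
theorem stmt_9 (Iminus : ℂ × ℂ → (ℂ × ℂ) → ℂ × ℂ)
    (hI : ∀ p v, Ds9 p (Iminus p v) =
      (Complex.I * (Ds9 p v).1, Complex.I * (Ds9 p v).2)) :
    (∀ p : ℂ × ℂ, W1 (fun q => W1bar K9 q) p = 1 ∧ W1 (fun q => W2bar K9 q) p = 0
      ∧ W2 (fun q => W1bar K9 q) p = 0 ∧ W2 (fun q => W2bar K9 q) p = 1)
    ∧ (∀ p v w : ℂ × ℂ,
        F11 Iminus p v w =
          Complex.I * (v.1 * (starRingEnd ℂ) w.1 - w.1 * (starRingEnd ℂ) v.1)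
          + Complex.I * (1 - 2 * (p.2 * (starRingEnd ℂ) p.2))
              * (v.2 * (starRingEnd ℂ) w.2 - w.2 * (starRingEnd ℂ) v.2)
          + (starRingEnd ℂ) p.2 * (v.2 * w.1 - w.2 * v.1)
          + p.2 * ((starRingEnd ℂ) v.2 * (starRingEnd ℂ) w.1
              - (starRingEnd ℂ) w.2 * (starRingEnd ℂ) v.1))
    ∧ (∀ p v₁ v₂ v₃ v₄ : ℂ × ℂ,
        wedge4 (F11 Iminus p) (F11 Iminus p) v₁ v₂ v₃ v₄ =
          -2 * (1 - p.2 * (starRingEnd ℂ) p.2) * vol9 v₁ v₂ v₃ v₄)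
    ∧ (∀ p : ℂ × ℂ, (-2 * (1 - p.2 * (starRingEnd ℂ) p.2) = 0 ↔ ‖p.2‖ = 1)) := by
  refine ⟨fun p => ?_, F11_eq hI, wedge4_F11_self hI,
    fun p => neg_two_mul_one_sub_mul_conj_eq_zero_iff p.2⟩
  rw [W1bar_K9, W2bar_K9]
  exact ⟨W1_fst p, W1_snd p, W2_fst p, W2_snd p⟩
end

section
/- Let g be the symmetric 2-tensor on ℝ⁴ ≅ ℂ² given in complex coordinates by g = 2(dq₁ dq̄₁ + dq₂ dq̄₂ + i q̄₂ dq₁ dq₂ - i q₂ dq̄₁ dq̄₂) (symmetric products). Then g is positive definite at every point with |q₂| < 1, and is degenerate at every point with |q₂| = 1. -/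
open Complex

/-- The symmetric 2-tensor
`g = 2(dq₁dq̄₁ + dq₂dq̄₂ + i q̄₂ dq₁dq₂ - i q₂ dq̄₁dq̄₂)` on `ℂ²`, evaluated at the
point `p` on tangent vectors `v, w` (symmetric products). -/
noncomputable def g10 (p v w : ℂ × ℂ) : ℂ :=
  (v.1 * (starRingEnd ℂ) w.1 + (starRingEnd ℂ) v.1 * w.1)
    + (v.2 * (starRingEnd ℂ) w.2 + (starRingEnd ℂ) v.2 * w.2)
    + Complex.I * (starRingEnd ℂ) p.2 * (v.1 * w.2 + w.1 * v.2)
    - Complex.I * p.2 * ((starRingEnd ℂ) v.1 * (starRingEnd ℂ) w.2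
        + (starRingEnd ℂ) w.1 * (starRingEnd ℂ) v.2)

/-!
Taking one term from each conjugate pair in `g` gives a form `h` (`g10Part`) with
`g = h + h̄ = 2 Re h`, so `g` is real. On the diagonal,
`g(v, v) = 2(|v₁|² + |v₂|²) + 4 Re(i q̄₂ v₁ v₂)`, and the cross term is at least
`-4|q₂| |v₁| |v₂| ≥ -2|q₂| (|v₁|² + |v₂|²)`, which gives positivity when `|q₂| < 1`.
The vector `(i q₂, 1)` satisfies
`g((i q₂, 1), w) = 2 (1 - |q₂|²) Re w₂`, so it lies in the kernel when `|q₂| = 1`.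
-/

open scoped ComplexConjugate

noncomputable def g10Part (p v w : ℂ × ℂ) : ℂ :=
  v.1 * conj w.1 + v.2 * conj w.2 + I * conj p.2 * (v.1 * w.2 + w.1 * v.2)

lemma g10_eq_add_conj (p v w : ℂ × ℂ) :
    g10 p v w = g10Part p v w + conj (g10Part p v w) := by
  simp only [g10, g10Part, map_add, map_mul, conj_I, conj_conj]
  ring

lemma g10_eq_ofReal (p v w : ℂ × ℂ) : g10 p v w = ((2 * (g10Part p v w).re : ℝ) : ℂ) := by
  rw [g10_eq_add_conj, add_conj]

lemma g10_im (p v w : ℂ × ℂ) : (g10 p v w).im = 0 := by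
  rw [g10_eq_ofReal, ofReal_im]

lemma g10_self_re (p v : ℂ × ℂ) :
    (g10 p v v).re = 2 * (‖v.1‖ ^ 2 + ‖v.2‖ ^ 2) + 4 * (I * conj p.2 * (v.1 * v.2)).re := by
  rw [g10_eq_ofReal, ofReal_re, g10Part, mul_conj, mul_conj, ← two_mul,
    mul_left_comm]
  simp only [add_re, ofReal_re, mul_re 2, re_ofNat, im_ofNat, zero_mul, sub_zero,
    normSq_eq_norm_sq]
  ring

lemma sq_add_sq_sub_two_mul_mul_pos {r x y : ℝ} (hr : r < 1) (hx : 0 ≤ x) (hy : 0 ≤ y)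
    (hxy : x ≠ 0 ∨ y ≠ 0) : 0 < x ^ 2 + y ^ 2 - 2 * r * x * y := by
  have hsq : 0 < x ^ 2 + y ^ 2 := by
    rcases hxy with h | h <;> positivity
  rcases le_total 0 r with hr0 | hr0
  · nlinarith [mul_nonneg hr0 (sq_nonneg (x - y)), mul_pos (sub_pos.mpr hr) hsq]
  · nlinarith [mul_nonneg (neg_nonneg.mpr hr0) (mul_nonneg hx hy)]

lemma g10_self_re_pos {p : ℂ × ℂ} (hp : ‖p.2‖ < 1) {v : ℂ × ℂ} (hv : v ≠ 0) :
    0 < (g10 p v v).re := by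
  have hcross : -(‖p.2‖ * ‖v.1‖ * ‖v.2‖) ≤ (I * conj p.2 * (v.1 * v.2)).re := by
    have := (abs_le.mp (abs_re_le_norm (I * conj p.2 * (v.1 * v.2)))).1
    simpa [mul_assoc] using this
  have hv' : v.1 ≠ 0 ∨ v.2 ≠ 0 := by
    by_contra! h
    exact hv (Prod.ext h.1 h.2)
  have hpos := sq_add_sq_sub_two_mul_mul_pos hp (norm_nonneg v.1) (norm_nonneg v.2)
    (hv'.imp norm_ne_zero_iff.mpr norm_ne_zero_iff.mpr)
  rw [g10_self_re]
  linarith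

lemma g10_I_mul_snd_one (p w : ℂ × ℂ) :
    g10 p (I * p.2, 1) w = (1 - normSq p.2) * (w.2 + conj w.2) := by
  simp only [g10, map_mul, map_one, conj_I]
  linear_combination (-(w.2) - conj w.2) * mul_conj p.2
    + (w.2 + conj w.2) * p.2 * conj p.2 * I_sq

/-- `g` is real and positive definite at every point with `|q₂| < 1`,
and degenerate at every point with `|q₂| = 1`. -/
theorem stmt_10 :
    ∀ p : ℂ × ℂ,
      (∀ v w : ℂ × ℂ, (g10 p v w).im = 0)
      ∧ (‖p.2‖ < 1 → ∀ v : ℂ × ℂ, v ≠ 0 → 0 < (g10 p v v).re)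
      ∧ (‖p.2‖ = 1 → ∃ v : ℂ × ℂ, v ≠ 0 ∧ ∀ w, g10 p v w = 0) := by
  intro p
  refine ⟨g10_im p, fun hp v hv => g10_self_re_pos hp hv, fun hp => ?_⟩
  refine ⟨(I * p.2, 1), fun h => one_ne_zero (congrArg Prod.snd h), fun w => ?_⟩
  rw [g10_I_mul_snd_one, normSq_eq_norm_sq, hp]
  norm_num
end

section
/- Let V be a real vector space with a complex structure I, a skew map Q : V* → V, and an alternating form F : V → V* satisfying F I + I* F + F Q F = 0. Set I^F := I + Q F. Then (I^F)² = -1 if and only if Q F Q F + Q F I + I Q F = 0; moreover, the condition F I + I* F + F Q F = 0 together with Q skew and I Q = Q I* implies (I^F)² = -1. -/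
/-- with `I² = -1`, `F` alternating, `Q` skew, `IQ = QI*`, and
`FI + I*F + FQF = 0`, setting `I^F := I + QF`: `(I^F)² = -1` iff
`QFQF + QFI + IQF = 0`; moreover the hypotheses imply `(I^F)² = -1`. -/
theorem stmt_14 {V : Type*} [AddCommGroup V] [Module ℝ V] [FiniteDimensional ℝ V]
    (I : V →ₗ[ℝ] V) (hI : ∀ v, I (I v) = -v)
    (F : V →ₗ[ℝ] Module.Dual ℝ V) (hF : ∀ u v, F u v = -F v u)
    (Q : Module.Dual ℝ V →ₗ[ℝ] V)
    (hQ : ∀ ξ η : Module.Dual ℝ V, ξ (Q η) = -η (Q ξ))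
    (hcompat : ∀ ξ : Module.Dual ℝ V, I (Q ξ) = Q (I.dualMap ξ))
    (heq : ∀ v, F (I v) + I.dualMap (F v) + F (Q (F v)) = 0) :
    ((∀ v, I (I v + Q (F v)) + Q (F (I v + Q (F v))) = -v) ↔
      (∀ v, Q (F (Q (F v))) + Q (F (I v)) + I (Q (F v)) = 0))
    ∧ (∀ v, I (I v + Q (F v)) + Q (F (I v + Q (F v))) = -v) := by
  have key : ∀ v, Q (F (Q (F v))) + Q (F (I v)) + I (Q (F v)) = 0 := by
    intro v
    have h := congrArg Q (heq v)
    simp only [map_add, map_zero] at h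
    rw [← hcompat (F v)] at h
    rw [← h]; abel
  have expand : ∀ v, I (I v + Q (F v)) + Q (F (I v + Q (F v)))
      = -v + (Q (F (Q (F v))) + Q (F (I v)) + I (Q (F v))) := by
    intro v
    simp only [map_add, hI]
    abel
  refine ⟨⟨fun h v => ?_, fun h v => by rw [expand v, h v, add_zero]⟩,
    fun v => by rw [expand v, key v, add_zero]⟩
  have := expand v
  rw [h v] at this
  have : -v + 0 = -v + (Q (F (Q (F v))) + Q (F (I v)) + I (Q (F v))) := by
    rw [add_zero]; exact this
  exact (add_left_cancel this).symm
end
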